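/- arXiv:2305.13856 — 3 statements merged into one kernel-verified Lean document; each statement's English description precedes it below -/
import Mathlib

section
/- Let F : ℝ^d → ℝ be L-smooth (‖∇F(w) − ∇F(w')‖ ≤ L‖w − w'‖ for all w, w'). Let u ∈ ℝ^d with u ≠ 0, η > 0, and w⁺ = w − η u/‖u‖. Then for any γ ∈ (0, 1), F(w⁺) ≤ F(w) − η((1−γ)/(1+γ))‖∇F(w)‖ + η(2/(γ(1+γ)))‖u − ∇F(w)‖ + η²L/2. -/
/-!
With `v = w⁺ - w = -η u/‖u‖`, the descent lemma for an `L`-smooth function gives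
`F(w⁺) ≤ F(w) - η ⟪∇F(w), u⟫/‖u‖ + η²L/2`, so it remains to bound the alignment `⟪g, u⟫/‖u‖` of
`g = ∇F(w)` with the direction of `u` from below. If `‖u - g‖ ≤ γ‖g‖`, then `⟪g, u⟫ ≥ (1-γ)‖g‖²`
and `‖u‖ ≤ (1+γ)‖g‖`, so the alignment is at least `(1-γ)/(1+γ) ‖g‖`. Otherwise `‖g‖ < ‖u - g‖/γ`,
and Cauchy–Schwarz bounds `-⟪g, u⟫/‖u‖` by `‖g‖`, which is absorbed into the error term.
-/

open InnerProductSpace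

section SmoothDescent

variable {E : Type*} [NormedAddCommGroup E] [InnerProductSpace ℝ E] [CompleteSpace E]
  {F : E → ℝ}

lemma hasDerivAt_comp_add_smul (hF : Differentiable ℝ F) (x v : E) (t : ℝ) :
    HasDerivAt (fun s : ℝ => F (x + s • v)) ⟪gradient F (x + t • v), v⟫_ℝ t := by
  have hline : HasDerivAt (fun s : ℝ => x + s • v) v t := by
    simpa using ((hasDerivAt_id t).smul_const v).const_add x
  simpa [Function.comp_def] using
    (hF _).hasGradientAt.hasFDerivAt.comp_hasDerivAt t hline

theorem le_add_inner_gradient_add_of_gradient_lipschitz (hF : Differentiable ℝ F) {L : ℝ}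
    (hL : ∀ x y, ‖gradient F x - gradient F y‖ ≤ L * ‖x - y‖) (x y : E) :
    F y ≤ F x + ⟪gradient F x, y - x⟫_ℝ + L / 2 * ‖y - x‖ ^ 2 := by
  set v := y - x
  -- `F` along the segment minus its quadratic model; the Lipschitz bound makes it antitone on `t ≥ 0`
  let φ : ℝ → ℝ := fun t => F (x + t • v) - t * ⟪gradient F x, v⟫_ℝ - L / 2 * t ^ 2 * ‖v‖ ^ 2
  have hφ : ∀ t, HasDerivAt φ
      (⟪gradient F (x + t • v), v⟫_ℝ - ⟪gradient F x, v⟫_ℝ - L * t * ‖v‖ ^ 2) t := by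
    intro t
    refine (((hasDerivAt_comp_add_smul hF x v t).sub
      ((hasDerivAt_id t).mul_const ⟪gradient F x, v⟫_ℝ)).sub
      (((hasDerivAt_pow 2 t).const_mul (L / 2)).mul_const (‖v‖ ^ 2))).congr_deriv ?_
    ring
  have hφ' : ∀ t ∈ interior (Set.Ici (0 : ℝ)), deriv φ t ≤ 0 := by
    intro t ht
    rw [interior_Ici, Set.mem_Ioi] at ht
    have hgrad : ‖gradient F (x + t • v) - gradient F x‖ ≤ L * (t * ‖v‖) := by
      simpa [norm_smul, abs_of_pos ht] using hL (x + t • v) x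
    calc deriv φ t = ⟪gradient F (x + t • v) - gradient F x, v⟫_ℝ - L * t * ‖v‖ ^ 2 := by
          rw [(hφ t).deriv, inner_sub_left]
      _ ≤ ‖gradient F (x + t • v) - gradient F x‖ * ‖v‖ - L * t * ‖v‖ ^ 2 := by
          gcongr; exact real_inner_le_norm _ _
      _ ≤ L * (t * ‖v‖) * ‖v‖ - L * t * ‖v‖ ^ 2 := by gcongr
      _ = 0 := by ring
  have hanti : AntitoneOn φ (Set.Ici 0) :=
    antitoneOn_of_deriv_nonpos (convex_Ici 0) (fun t _ => (hφ t).continuousAt.continuousWithinAt)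
      (fun t _ => (hφ t).differentiableAt.differentiableWithinAt) hφ'
  have h10 : φ 1 ≤ φ 0 := hanti (by simp) (by simp) zero_le_one
  simp only [φ, v, one_smul, add_sub_cancel, zero_smul, add_zero] at h10
  linarith

end SmoothDescent

section NormalizedDirection

variable {E : Type*} [NormedAddCommGroup E] [InnerProductSpace ℝ E]

lemma mul_norm_le_inner_div_norm_of_norm_sub_le {g u : E} (hu : u ≠ 0) {γ : ℝ}
    (hγ : γ ∈ Set.Ioo (0 : ℝ) 1)
    (hsmall : ‖u - g‖ ≤ γ * ‖g‖) :
    (1 - γ) / (1 + γ) * ‖g‖ ≤ ⟪g, u⟫_ℝ / ‖u‖ := by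
  obtain ⟨hγ0, hγ1⟩ := hγ
  have hinner : (1 - γ) * ‖g‖ ^ 2 ≤ ⟪g, u⟫_ℝ := by
    have hcs : -(‖g‖ * ‖u - g‖) ≤ ⟪g, u - g⟫_ℝ :=
      neg_le_of_abs_le (abs_real_inner_le_norm g (u - g))
    have hsplit : ⟪g, u⟫_ℝ = ‖g‖ ^ 2 + ⟪g, u - g⟫_ℝ := by
      rw [inner_sub_right, real_inner_self_eq_norm_sq]; ring
    nlinarith [norm_nonneg g]
  have hnorm : ‖u‖ ≤ (1 + γ) * ‖g‖ := by
    calc ‖u‖ = ‖g + (u - g)‖ := by rw [add_sub_cancel]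
      _ ≤ ‖g‖ + ‖u - g‖ := norm_add_le _ _
      _ ≤ (1 + γ) * ‖g‖ := by linarith
  rw [div_mul_eq_mul_div, div_le_div_iff₀ (by linarith) (norm_pos_iff.mpr hu)]
  nlinarith [norm_nonneg g,
    mul_le_mul_of_nonneg_left hnorm (mul_nonneg (sub_nonneg.2 hγ1.le) (norm_nonneg g))]

lemma neg_inner_div_norm_le_of_lt_norm_sub {g u : E} {γ : ℝ} (hγ : γ ∈ Set.Ioo (0 : ℝ) 1)
    (hlarge : γ * ‖g‖ < ‖u - g‖) :
    -(⟪g, u⟫_ℝ / ‖u‖) ≤ -((1 - γ) / (1 + γ) * ‖g‖) + 2 / (γ * (1 + γ)) * ‖u - g‖ := by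
  obtain ⟨hγ0, hγ1⟩ := hγ
  have hcs : -(⟪g, u⟫_ℝ / ‖u‖) ≤ ‖g‖ := by
    rw [neg_div']
    exact div_le_of_le_mul₀ (norm_nonneg u) (norm_nonneg g)
      ((neg_le_abs _).trans (abs_real_inner_le_norm g u))
  have habsorb : ‖g‖ ≤ -((1 - γ) / (1 + γ) * ‖g‖) + 2 / (γ * (1 + γ)) * ‖u - g‖ := by
    rw [← sub_nonneg]
    have heq : -((1 - γ) / (1 + γ) * ‖g‖) + 2 / (γ * (1 + γ)) * ‖u - g‖ - ‖g‖
        = 2 * (‖u - g‖ - γ * ‖g‖) / (γ * (1 + γ)) := by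
      field_simp; ring
    rw [heq]; apply div_nonneg <;> nlinarith
  linarith

lemma neg_inner_div_norm_le {g u : E} (hu : u ≠ 0) {γ : ℝ} (hγ : γ ∈ Set.Ioo (0 : ℝ) 1) :
    -(⟪g, u⟫_ℝ / ‖u‖) ≤ -((1 - γ) / (1 + γ) * ‖g‖) + 2 / (γ * (1 + γ)) * ‖u - g‖ := by
  rcases le_or_gt ‖u - g‖ (γ * ‖g‖) with hsmall | hlarge
  · have hlower := mul_norm_le_inner_div_norm_of_norm_sub_le hu hγ hsmall
    have herr : 0 ≤ 2 / (γ * (1 + γ)) * ‖u - g‖ := by have := hγ.1; positivity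
    linarith
  · exact neg_inner_div_norm_le_of_lt_norm_sub hγ hlarge

end NormalizedDirection

theorem stmt10 {d : ℕ} (F : EuclideanSpace ℝ (Fin d) → ℝ) (L : ℝ)
    (hdiff : Differentiable ℝ F)
    (hL : ∀ w w', ‖gradient F w - gradient F w'‖ ≤ L * ‖w - w'‖)
    (w u : EuclideanSpace ℝ (Fin d)) (hu : u ≠ 0) (η : ℝ) (hη : 0 < η)
    (γ : ℝ) (hγ : γ ∈ Set.Ioo (0 : ℝ) 1) :
    F (w - (η / ‖u‖) • u) ≤
      F w - η * ((1 - γ) / (1 + γ)) * ‖gradient F w‖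
        + η * (2 / (γ * (1 + γ))) * ‖u - gradient F w‖ + η ^ 2 * L / 2 := by
  have hu' : 0 < ‖u‖ := norm_pos_iff.mpr hu
  have hstep : w - (η / ‖u‖) • u - w = -((η / ‖u‖) • u) := sub_sub_cancel_left _ _
  have hnorm : ‖(η / ‖u‖) • u‖ = η := by
    rw [norm_smul, Real.norm_of_nonneg (by positivity), div_mul_cancel₀ _ hu'.ne']
  have hinner : ⟪gradient F w, -((η / ‖u‖) • u)⟫_ℝ = η * -(⟪gradient F w, u⟫_ℝ / ‖u‖) := by
    rw [inner_neg_right, real_inner_smul_right]; ring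
  calc F (w - (η / ‖u‖) • u)
      ≤ F w + η * -(⟪gradient F w, u⟫_ℝ / ‖u‖) + L / 2 * η ^ 2 := by
        simpa only [hstep, hinner, norm_neg, hnorm] using
          le_add_inner_gradient_add_of_gradient_lipschitz hdiff hL w (w - (η / ‖u‖) • u)
    _ ≤ F w + η * (-((1 - γ) / (1 + γ) * ‖gradient F w‖)
          + 2 / (γ * (1 + γ)) * ‖u - gradient F w‖) + L / 2 * η ^ 2 := by
        gcongr; exact neg_inner_div_norm_le hu hγ
    _ = _ := by ring
end

section
/- For any vector g ∈ ℝ^d and any nonzero u ∈ ℝ^d, and any γ ∈ (0, 1), if ‖u − g‖ > γ‖g‖ then −gᵀu/‖u‖ ≤ −((1−γ)/(1+γ))‖g‖ + (2/(γ(1+γ)))‖u − g‖. -/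
theorem neg_real_inner_div_norm_le_norm {E : Type*} [NormedAddCommGroup E] [InnerProductSpace ℝ E]
    (g u : E) : -inner ℝ g u / ‖u‖ ≤ ‖g‖ := by
  refine div_le_of_le_mul₀ (norm_nonneg u) (norm_nonneg g) ?_
  simpa only [inner_neg_left, norm_neg] using real_inner_le_norm (-g) u

theorem le_neg_mul_add_mul_of_mul_le {γ a b : ℝ} (hγ : 0 < γ) (h : γ * a ≤ b) :
    a ≤ -((1 - γ) / (1 + γ)) * a + 2 / (γ * (1 + γ)) * b := by
  have gap : -((1 - γ) / (1 + γ)) * a + 2 / (γ * (1 + γ)) * b - a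
      = 2 * (b - γ * a) / (γ * (1 + γ)) := by
    field_simp
    ring
  have : 0 ≤ 2 * (b - γ * a) / (γ * (1 + γ)) := by
    have : 0 ≤ b - γ * a := sub_nonneg.mpr h
    positivity
  linarith

theorem stmt12_general {d : ℕ} (g u : EuclideanSpace ℝ (Fin d))
    (γ : ℝ) (hγ : γ ∈ Set.Ioo (0 : ℝ) 1) (herr : γ * ‖g‖ < ‖u - g‖) :
    -(inner ℝ g u : ℝ) / ‖u‖ ≤
      -((1 - γ) / (1 + γ)) * ‖g‖ + (2 / (γ * (1 + γ))) * ‖u - g‖ :=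
  (neg_real_inner_div_norm_le_norm g u).trans (le_neg_mul_add_mul_of_mul_le hγ.1 herr.le)

theorem stmt12 {d : ℕ} (g u : EuclideanSpace ℝ (Fin d)) (hu : u ≠ 0)
    (γ : ℝ) (hγ : γ ∈ Set.Ioo (0 : ℝ) 1) (herr : γ * ‖g‖ < ‖u - g‖) :
    -(inner ℝ g u : ℝ) / ‖u‖ ≤
      -((1 - γ) / (1 + γ)) * ‖g‖ + (2 / (γ * (1 + γ))) * ‖u - g‖ :=
  stmt12_general g u γ hγ herr
end

section
/- Let F be L-smooth with F(w₀) − F* ≤ F₀, and suppose real numbers e_t ≥ 0 satisfy e_t ≥ E‖u_t − ∇F(w_t)‖, where w_{t+1} = w_t − η u_t/‖u_t‖. Then (1/T)∑_{t=0}^{T−1} E‖∇F(w_t)‖ ≤ 2F₀/(ηT) + (9/T)∑_{t=0}^{T−1} e_t + ηL. -/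
/-!
For `L`-smooth `F` the descent lemma gives `F (x + v) ≤ F x + ⟪∇F x, v⟫ + L/2 ‖v‖²`. For the
normalized step `v = -η a/‖a‖` one has `⟪∇F x, a/‖a‖⟫ ≥ ‖a‖ - ‖a - ∇F x‖ ≥ ‖∇F x‖ - 2‖a - ∇F x‖`,
so every step decreases `F` by at least `η‖∇F x‖ - 2η‖a - ∇F x‖ - η²L/2`. Summing over the
trajectory, the decrease telescopes to `F (w 0) - F (w T) ≤ F0`; taking expectations and dividing
by `ηT` gives the bound.
-/

open MeasureTheory InnerProductSpace Finset
open scoped Gradient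

theorem sum_range_le_sub_add_sum {c f b : ℕ → ℝ} (h : ∀ t, c t ≤ f t - f (t + 1) + b t)
    (T : ℕ) : ∑ t ∈ range T, c t ≤ f 0 - f T + ∑ t ∈ range T, b t := by
  induction T with
  | zero => simp
  | succ T ih => rw [sum_range_succ, sum_range_succ]; linarith [h T]

section Smooth

variable {E : Type*} [NormedAddCommGroup E] [InnerProductSpace ℝ E]

theorem norm_sub_two_mul_norm_sub_le_inner_inv_norm_smul (g a : E) :
    ‖g‖ - 2 * ‖a - g‖ ≤ ⟪g, ‖a‖⁻¹ • a⟫_ℝ := by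
  rcases eq_or_ne a 0 with rfl | ha
  · simp [two_mul]
  have hpos : 0 < ‖a‖ := norm_pos_iff.2 ha
  have hga : ⟪g, a⟫_ℝ = ‖a‖ ^ 2 + ⟪g - a, a⟫_ℝ := by
    rw [inner_sub_left, real_inner_self_eq_norm_sq]; ring
  rw [real_inner_smul_right, hga, le_inv_mul_iff₀ hpos]
  nlinarith [neg_le_of_abs_le (abs_real_inner_le_norm (g - a) a), norm_sub_norm_le g a,
    norm_sub_rev g a]

variable [CompleteSpace E] {F : E → ℝ} {L : ℝ}

theorem le_add_inner_gradient_add_of_lipschitz_gradient (hdiff : Differentiable ℝ F)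
    (hL : ∀ x y, ‖∇ F x - ∇ F y‖ ≤ L * ‖x - y‖) (x v : E) :
    F (x + v) ≤ F x + ⟪∇ F x, v⟫_ℝ + L / 2 * ‖v‖ ^ 2 := by
  set φ : ℝ → ℝ := fun t => F (x + t • v) - t * ⟪∇ F x, v⟫_ℝ - L / 2 * ‖v‖ ^ 2 * t ^ 2
  have hφ : ∀ t, HasDerivAt φ (⟪∇ F (x + t • v) - ∇ F x, v⟫_ℝ - L * ‖v‖ ^ 2 * t) t := by
    intro t
    have hline : HasDerivAt (fun s : ℝ => x + s • v) v t := by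
      simpa using ((hasDerivAt_id t).smul_const v).const_add x
    have hF := ((hdiff _).hasGradientAt.hasFDerivAt).comp_hasDerivAt t hline
    refine ((hF.sub ((hasDerivAt_id t).mul_const _)).sub
      ((hasDerivAt_pow 2 t).const_mul (L / 2 * ‖v‖ ^ 2))).congr_deriv ?_
    simp only [toDual_apply_apply, inner_sub_left]
    ring
  have hφ' : ∀ t, 0 ≤ t → ⟪∇ F (x + t • v) - ∇ F x, v⟫_ℝ - L * ‖v‖ ^ 2 * t ≤ 0 := by
    intro t ht
    have hlip : ‖∇ F (x + t • v) - ∇ F x‖ ≤ L * t * ‖v‖ := by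
      simpa [norm_smul, abs_of_nonneg ht, mul_assoc] using hL (x + t • v) x
    nlinarith [real_inner_le_norm (∇ F (x + t • v) - ∇ F x) v, norm_nonneg v]
  have hanti : AntitoneOn φ (Set.Ici 0) :=
    antitoneOn_of_hasDerivWithinAt_nonpos (convex_Ici 0)
      (HasDerivAt.continuousOn fun t _ => hφ t) (fun t _ => (hφ t).hasDerivWithinAt)
      (fun t ht => hφ' t (le_of_lt (by simpa using ht)))
  have h01 : φ 1 ≤ φ 0 := hanti Set.self_mem_Ici (Set.mem_Ici.2 zero_le_one) zero_le_one
  norm_num [φ, ← inner_gradient_left] at h01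
  linarith

-- For `a = 0` the step is `0`, since `η / ‖0‖ = 0`.
theorem mul_norm_gradient_le_of_normalized_step (hdiff : Differentiable ℝ F)
    (hL : ∀ x y, ‖∇ F x - ∇ F y‖ ≤ L * ‖x - y‖) (hL0 : 0 ≤ L) {η : ℝ} (hη : 0 ≤ η) (x a : E) :
    η * ‖∇ F x‖ ≤ F x - F (x - (η / ‖a‖) • a) + (2 * η * ‖a - ∇ F x‖ + η ^ 2 * L / 2) := by
  have hlen : ‖(η / ‖a‖) • a‖ ≤ η := by
    rw [norm_smul, Real.norm_of_nonneg (by positivity)]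
    exact mul_le_of_le_div₀ hη (norm_nonneg a) le_rfl
  have hdesc := le_add_inner_gradient_add_of_lipschitz_gradient hdiff hL x (-((η / ‖a‖) • a))
  have hinner : ⟪∇ F x, -((η / ‖a‖) • a)⟫_ℝ = -(η * ⟪∇ F x, ‖a‖⁻¹ • a⟫_ℝ) := by
    rw [inner_neg_right, div_eq_mul_inv, mul_smul, real_inner_smul_right]
  rw [norm_neg, hinner, ← sub_eq_add_neg] at hdesc
  nlinarith [norm_sub_two_mul_norm_sub_le_inner_inv_norm_smul (∇ F x) a,
    pow_le_pow_left₀ (norm_nonneg _) hlen 2]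

theorem sum_mul_norm_gradient_le_of_normalized_steps (hdiff : Differentiable ℝ F)
    (hL : ∀ x y, ‖∇ F x - ∇ F y‖ ≤ L * ‖x - y‖) (hL0 : 0 ≤ L) {η : ℝ} (hη : 0 ≤ η)
    {x a : ℕ → E} (hx : ∀ t, x (t + 1) = x t - (η / ‖a t‖) • a t) (T : ℕ) :
    ∑ t ∈ range T, η * ‖∇ F (x t)‖ ≤
      F (x 0) - F (x T) + ∑ t ∈ range T, (2 * η * ‖a t - ∇ F (x t)‖ + η ^ 2 * L / 2) :=
  sum_range_le_sub_add_sum (fun t => hx t ▸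
    mul_norm_gradient_le_of_normalized_step hdiff hL hL0 hη (x t) (a t)) T

end Smooth

theorem sum_integral_le_add_sum_integral {ι Ω : Type*} [MeasurableSpace Ω] {μ : Measure Ω}
    [IsProbabilityMeasure μ] {s : Finset ι} {X Y : ι → Ω → ℝ}
    {c : ℝ} (h : ∀ ω, ∑ i ∈ s, X i ω ≤ c + ∑ i ∈ s, Y i ω)
    (hX : ∀ i ∈ s, Integrable (X i) μ) (hY : ∀ i ∈ s, Integrable (Y i) μ) :
    ∑ i ∈ s, ∫ ω, X i ω ∂μ ≤ c + ∑ i ∈ s, ∫ ω, Y i ω ∂μ := by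
  rw [← integral_finsetSum s hX, ← integral_finsetSum s hY]
  calc ∫ ω, ∑ i ∈ s, X i ω ∂μ ≤ ∫ ω, (c + ∑ i ∈ s, Y i ω) ∂μ :=
        integral_mono (integrable_finsetSum s hX)
          ((integrable_const c).add (integrable_finsetSum s hY)) h
    _ = c + ∫ ω, ∑ i ∈ s, Y i ω ∂μ := by
        rw [integral_add (integrable_const c) (integrable_finsetSum s hY), integral_const]
        simp

theorem stmt18 {Ω : Type*} [MeasurableSpace Ω] (μ : Measure Ω) [IsProbabilityMeasure μ]
    {d : ℕ} (F : EuclideanSpace ℝ (Fin d) → ℝ) (L Fstar F0 η : ℝ) (T : ℕ)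
    (hdiff : Differentiable ℝ F) (hL0 : 0 ≤ L)
    (hL : ∀ w w', ‖gradient F w - gradient F w'‖ ≤ L * ‖w - w'‖)
    (hlow : ∀ w, Fstar ≤ F w)
    (w u : ℕ → Ω → EuclideanSpace ℝ (Fin d))
    (h0 : ∀ ω, F (w 0 ω) - Fstar ≤ F0)
    (hupd : ∀ t ω, w (t + 1) ω = w t ω - (η / ‖u t ω‖) • u t ω)
    (hη : 0 < η) (hT : 0 < T)
    (e : ℕ → ℝ)
    (hint1 : ∀ t, Integrable (fun ω => ‖gradient F (w t ω)‖) μ)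
    (hint2 : ∀ t, Integrable (fun ω => ‖u t ω - gradient F (w t ω)‖) μ)
    (he : ∀ t, ∫ ω, ‖u t ω - gradient F (w t ω)‖ ∂μ ≤ e t) :
    (1 / T : ℝ) * ∑ t ∈ Finset.range T, ∫ ω, ‖gradient F (w t ω)‖ ∂μ ≤
      2 * F0 / (η * T) + (9 / T) * ∑ t ∈ Finset.range T, e t + η * L := by
  have hpath : ∀ ω, ∑ t ∈ range T, η * ‖∇ F (w t ω)‖ ≤
      F0 + ∑ t ∈ range T, (2 * η * ‖u t ω - ∇ F (w t ω)‖ + η ^ 2 * L / 2) := fun ω =>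
    (sum_mul_norm_gradient_le_of_normalized_steps hdiff hL hL0 hη.le (hupd · ω) T).trans
      (by linarith [hlow (w T ω), h0 ω])
  have hmean := sum_integral_le_add_sum_integral hpath (fun t _ => (hint1 t).const_mul η)
    (fun t _ => ((hint2 t).const_mul (2 * η)).add (integrable_const (η ^ 2 * L / 2)))
  simp only [integral_const_mul, integral_add ((hint2 _).const_mul _) (integrable_const _),
    integral_const, probReal_univ, one_smul, ← mul_sum, sum_add_distrib, sum_const, card_range,
    nsmul_eq_mul] at hmean
  have herr : ∑ t ∈ range T, ∫ ω, ‖u t ω - ∇ F (w t ω)‖ ∂μ ≤ ∑ t ∈ range T, e t :=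
    sum_le_sum fun t _ => he t
  have herr0 : 0 ≤ ∑ t ∈ range T, ∫ ω, ‖u t ω - ∇ F (w t ω)‖ ∂μ :=
    sum_nonneg fun t _ => integral_nonneg fun ω => norm_nonneg _
  have hF0 : 0 ≤ F0 := by
    obtain ⟨ω⟩ := μ.nonempty_of_neZero
    linarith [hlow (w 0 ω), h0 ω]
  have hTpos : (0 : ℝ) < T := by exact_mod_cast hT
  rw [one_div, inv_mul_le_iff₀ hTpos, ← mul_le_mul_iff_right₀ hη]
  calc η * ∑ t ∈ range T, ∫ ω, ‖∇ F (w t ω)‖ ∂μ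
      ≤ 2 * F0 + 9 * η * ∑ t ∈ range T, e t + T * η ^ 2 * L := by
        nlinarith [mul_nonneg hTpos.le (mul_nonneg (sq_nonneg η) hL0)]
    _ = η * (T * (2 * F0 / (η * T) + 9 / T * ∑ t ∈ range T, e t + η * L)) := by
        field_simp
end
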